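/- arXiv:2509.05009 — 4 statements merged into one kernel-verified Lean document; each statement's English description precedes it below -/
import Mathlib

section
/- Let F be a field in which z^d + 1 splits into linear factors. If a homogeneous degree-d polynomial f ∈ F[x_1,...,x_n] can be written as e_d(L_1,...,L_m) for linear forms L_1,...,L_m, and q is a linear form, then f + q^d can be written as e_d(L_1',...,L_{m'}') for some linear forms L_1',...,L_{m'}' (namely, by appending -ω_1·q,...,-ω_d·q where ω_i are the roots of z^d+1). -/
open Finset

def esymmVal {R : Type*} [CommSemiring R] {n : ℕ} (k : ℕ) (a : Fin n → R) : R :=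
  ∑ S ∈ Finset.powersetCard k (Finset.univ : Finset (Fin n)), ∏ i ∈ S, a i

/-!
By Vieta, `e_k(a_1, …, a_N)` is the coefficient of `X ^ (N - k)` in `∏ (X + a_i)`. Appending the
entries `-ω_i q` multiplies this generating polynomial by `∏ (X - ω_i q)`, the homogenization of
`∏ (X - ω_i) = X ^ d + 1`, i.e. by `X ^ d + q ^ d`; comparing coefficients adds `q ^ d` to `e_d`.
-/

section

open Polynomial

variable {R : Type*}

section CommSemiring

variable [CommSemiring R]

@[simp]
lemma esymmVal_zero {N : ℕ} (a : Fin N → R) : esymmVal 0 a = 1 := by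
  simp [esymmVal]

lemma esymmVal_eq_zero_of_lt {N k : ℕ} (a : Fin N → R) (hk : N < k) : esymmVal k a = 0 := by
  rw [esymmVal, powersetCard_eq_empty.2 (by simpa using hk), sum_empty]

lemma esymmVal_eq_coeff_prod_X_add_C {N k : ℕ} (a : Fin N → R) (hk : k ≤ N) :
    esymmVal k a = (∏ i, (X + C (a i))).coeff (N - k) := by
  rw [Finset.prod_X_add_C_coeff _ _ (by simp), card_univ, Fintype.card_fin, Nat.sub_sub_self hk]
  rfl

lemma prod_X_add_C_append {m d : ℕ} (a : Fin m → R) (b : Fin d → R) :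
    ∏ i, (X + C (Fin.append a b i)) = (∏ i, (X + C (a i))) * ∏ i, (X + C (b i)) := by
  simp [Fin.prod_univ_add]

lemma coeff_prod_X_add_C_mul_X_pow_add_C {m : ℕ} (a : Fin m → R) (d : ℕ) (c : R) :
    ((∏ i, (X + C (a i))) * (X ^ d + C c)).coeff m = esymmVal d a + c := by
  have hlead : (∏ i, (X + C (a i))).coeff m = 1 := by
    rw [← esymmVal_zero a, esymmVal_eq_coeff_prod_X_add_C a m.zero_le, Nat.sub_zero]
  rw [mul_add, coeff_add, coeff_mul_X_pow', coeff_mul_C, hlead, one_mul]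
  split_ifs with hd
  · rw [esymmVal_eq_coeff_prod_X_add_C a hd]
  · rw [esymmVal_eq_zero_of_lt a (not_le.1 hd)]

lemma Polynomial.scaleRoots_X_pow_add_C [Nontrivial R] (d : ℕ) (c r : R) :
    (X ^ d + C c).scaleRoots r = X ^ d + C (c * r ^ d) := by
  ext k
  simp only [coeff_scaleRoots, natDegree_X_pow_add_C, coeff_add, coeff_X_pow, coeff_C]
  split_ifs <;> subst_vars <;> simp

lemma Polynomial.scaleRoots_prod [NoZeroDivisors R] {ι : Type*} (s : Finset ι) (p : ι → R[X])
    (r : R) : (∏ i ∈ s, p i).scaleRoots r = ∏ i ∈ s, (p i).scaleRoots r := by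
  classical
  induction s using Finset.induction_on with
  | empty => simp
  | insert i s hi ih => rw [prod_insert hi, prod_insert hi, mul_scaleRoots_of_noZeroDivisors, ih]

end CommSemiring

variable [CommRing R] [IsDomain R]

lemma prod_X_sub_C_mul_eq_X_pow_add_C {d : ℕ} (ω : Fin d → R)
    (hω : (X ^ d + 1 : R[X]) = ∏ i, (X - C (ω i))) (q : R) :
    ∏ i, (X - C (ω i * q)) = X ^ d + C (q ^ d) := by
  simp_rw [← X_sub_C_scaleRoots, ← scaleRoots_prod, ← hω, ← C_1, scaleRoots_X_pow_add_C, one_mul]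

lemma esymmVal_append_neg_mul {K : Type*} [CommRing K] [Algebra K R] {m d : ℕ} (a : Fin m → R)
    (ω : Fin d → K) (hω : (X ^ d + 1 : K[X]) = ∏ i, (X - C (ω i))) (q : R) :
    esymmVal d (Fin.append a fun i => -(algebraMap K R (ω i) * q)) = esymmVal d a + q ^ d := by
  have hωR := congrArg (Polynomial.map (algebraMap K R)) hω
  simp only [Polynomial.map_add, Polynomial.map_pow, map_X, Polynomial.map_one,
    Polynomial.map_prod, Polynomial.map_sub, map_C] at hωR
  have hneg : ∏ i, (X + C (-(algebraMap K R (ω i) * q))) = X ^ d + C (q ^ d) := by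
    simp_rw [map_neg, ← sub_eq_add_neg]
    exact prod_X_sub_C_mul_eq_X_pow_add_C _ hωR q
  rw [esymmVal_eq_coeff_prod_X_add_C _ (Nat.le_add_left d m), Nat.add_sub_cancel,
    prod_X_add_C_append, hneg, coeff_prod_X_add_C_mul_X_pow_add_C]

end

theorem stmt5_general {F : Type*} [Field F] (n d : ℕ) (ω : Fin d → F)
    (hω : (Polynomial.X ^ d + 1 : Polynomial F) = ∏ i, (Polynomial.X - Polynomial.C (ω i)))
    (f : MvPolynomial (Fin n) F)
    (m : ℕ) (L : Fin m → MvPolynomial (Fin n) F) (hL : ∀ i, (L i).IsHomogeneous 1)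
    (hfe : f = esymmVal d L)
    (q : MvPolynomial (Fin n) F) (hq : q.IsHomogeneous 1) :
    ∃ (m' : ℕ) (L' : Fin m' → MvPolynomial (Fin n) F),
      (∀ i, (L' i).IsHomogeneous 1) ∧ f + q ^ d = esymmVal d L' := by
  refine ⟨m + d, Fin.append L fun i => -(algebraMap F _ (ω i) * q), ?_, ?_⟩
  · refine Fin.addCases (fun i => ?_) (fun i => ?_)
    · simpa using hL i
    · simpa [MvPolynomial.algebraMap_eq] using (hq.C_mul (ω i)).neg
  · rw [hfe, esymmVal_append_neg_mul L ω hω q]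

theorem stmt5 {F : Type*} [Field F] (n d : ℕ) (hd : 1 ≤ d) (ω : Fin d → F)
    (hω : (Polynomial.X ^ d + 1 : Polynomial F) = ∏ i, (Polynomial.X - Polynomial.C (ω i)))
    (f : MvPolynomial (Fin n) F) (hf : f.IsHomogeneous d)
    (m : ℕ) (L : Fin m → MvPolynomial (Fin n) F) (hL : ∀ i, (L i).IsHomogeneous 1)
    (hfe : f = esymmVal d L)
    (q : MvPolynomial (Fin n) F) (hq : q.IsHomogeneous 1) :
    ∃ (m' : ℕ) (L' : Fin m' → MvPolynomial (Fin n) F),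
      (∀ i, (L' i).IsHomogeneous 1) ∧ f + q ^ d = esymmVal d L' :=
  stmt5_general n d ω hω f m L hL hfe q hq
end

section
/- Let F be a field of characteristic 2 containing a primitive 3rd root of unity. For every homogeneous degree-2 polynomial f ∈ F[x_1,...,x_n], there exist linear forms L_1,...,L_m ∈ F[x_1,...,x_n] such that e_2(L_1,...,L_m) = f and e_1(L_1,...,L_m) = 0. -/
/-!
Call `f` representable if `f = e₂(L)` for a finite family `L` of linear forms with `e₁(L) = 0`.
Since `e₂(L ++ M) = e₂(L) + e₂(M) + e₁(L) e₁(M)`, representable polynomials are closed under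
addition. In characteristic 2 the families `(a, a)` and `(a, b, a + b)` have `e₁ = 0` and
`e₂ = a²`, resp. `e₂ = a² + b² + ab`, so every product `ab` of linear forms is representable, and
every quadratic form is a sum of such products.
-/

open Finset

namespace Multiset

variable {R : Type*} [CommSemiring R]

theorem esymm_one (s : Multiset R) : s.esymm 1 = s.sum := by
  simp [esymm, powersetCard_one, map_map]

theorem zero_esymm {k : ℕ} (hk : k ≠ 0) : (0 : Multiset R).esymm k = 0 := by
  obtain ⟨k, rfl⟩ := Nat.exists_eq_succ_of_ne_zero hk
  simp [esymm, powersetCard_zero_right]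

theorem esymm_cons_succ (a : R) (s : Multiset R) (k : ℕ) :
    (a ::ₘ s).esymm (k + 1) = s.esymm (k + 1) + a * s.esymm k := by
  simp [esymm, powersetCard_cons, map_map, sum_map_mul_left]

theorem esymm_add_two (s t : Multiset R) :
    (s + t).esymm 2 = s.esymm 2 + t.esymm 2 + s.sum * t.sum := by
  induction s using Multiset.induction_on with
  | empty => simp [zero_esymm two_ne_zero]
  | cons a s ih =>
    rw [cons_add, esymm_cons_succ, esymm_cons_succ, ih, esymm_one, esymm_one, sum_add, sum_cons]
    ring

end Multiset

theorem esymmVal_get {R : Type*} [CommSemiring R] (l : List R) (k : ℕ) :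
    esymmVal k l.get = (l : Multiset R).esymm k := by
  rw [esymmVal, ← Finset.esymm_map_val, Fin.univ_val_map, List.ofFn_get]

section ZeroSumEsymmTwo

variable {S : Type*} [CommRing S]

def zeroSumEsymmTwo (V : Set S) : AddSubmonoid S where
  carrier := {f | ∃ s : Multiset S, (∀ x ∈ s, x ∈ V) ∧ s.sum = 0 ∧ s.esymm 2 = f}
  zero_mem' := ⟨0, by simp, Multiset.sum_zero, Multiset.zero_esymm two_ne_zero⟩
  add_mem' := by
    rintro - - ⟨s, hsV, hs, rfl⟩ ⟨t, htV, ht, rfl⟩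
    refine ⟨s + t, fun x hx => ?_, by rw [Multiset.sum_add, hs, ht, add_zero], ?_⟩
    · rcases Multiset.mem_add.mp hx with hx | hx
      exacts [hsV x hx, htV x hx]
    · rw [Multiset.esymm_add_two, hs, zero_mul, add_zero]

variable [CharP S 2] {V : Set S} {a b : S}

theorem mul_self_mem_zeroSumEsymmTwo (ha : a ∈ V) : a * a ∈ zeroSumEsymmTwo V :=
  ⟨{a, a}, by simp [ha], by simp [CharTwo.add_self_eq_zero], by simp⟩

theorem mem_zeroSumEsymmTwo_of_triple (ha : a ∈ V) (hb : b ∈ V) (hab : a + b ∈ V) :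
    a * b + a * a + b * b ∈ zeroSumEsymmTwo V := by
  refine ⟨{a, b, a + b}, by simp [ha, hb, hab], ?_, ?_⟩
  · simp only [Multiset.insert_eq_cons, Multiset.sum_cons, Multiset.sum_singleton]
    linear_combination (a + b) * CharTwo.two_eq_zero (R := S)
  · rw [Multiset.insert_eq_cons, Multiset.esymm_cons_succ a _ 1, Multiset.insert_eq_cons,
      one_add_one_eq_two, Multiset.esymm_pair_two, Multiset.esymm_pair_one]
    linear_combination a * b * CharTwo.two_eq_zero (R := S)

theorem mul_mem_zeroSumEsymmTwo (ha : a ∈ V) (hb : b ∈ V) (hab : a + b ∈ V) :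
    a * b ∈ zeroSumEsymmTwo V := by
  have h := add_mem (add_mem (mem_zeroSumEsymmTwo_of_triple ha hb hab)
    (mul_self_mem_zeroSumEsymmTwo ha)) (mul_self_mem_zeroSumEsymmTwo hb)
  convert h using 1
  linear_combination (-(a * a) - b * b) * CharTwo.two_eq_zero (R := S)

theorem Submodule.mul_self_subset_zeroSumEsymmTwo {R : Type*} [CommSemiring R] [Algebra R S]
    (V : Submodule R S) : ((V * V : Submodule R S) : Set S) ⊆ zeroSumEsymmTwo (V : Set S) :=
  fun _ hf => Submodule.mul_induction_on hf
    (fun _ ha _ hb => mul_mem_zeroSumEsymmTwo ha hb (V.add_mem ha hb)) (fun _ _ => add_mem)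

end ZeroSumEsymmTwo

theorem stmt7_general {F : Type*} [Field F] [CharP F 2]
    (n : ℕ) (f : MvPolynomial (Fin n) F) (hf : f.IsHomogeneous 2) :
    ∃ (m : ℕ) (L : Fin m → MvPolynomial (Fin n) F),
      (∀ i, (L i).IsHomogeneous 1) ∧ esymmVal 2 L = f ∧ esymmVal 1 L = 0 := by
  set V := MvPolynomial.homogeneousSubmodule (Fin n) F 1
  have hf' : f ∈ V * V := by
    rwa [← pow_two, MvPolynomial.homogeneousSubmodule_one_pow]
  obtain ⟨s, hsV, hs, rfl⟩ := V.mul_self_subset_zeroSumEsymmTwo hf'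
  refine ⟨s.toList.length, s.toList.get,
    fun i => hsV _ (Multiset.mem_toList.mp (List.get_mem _ _)), ?_, ?_⟩
  · rw [esymmVal_get, Multiset.coe_toList]
  · rw [esymmVal_get, Multiset.coe_toList, Multiset.esymm_one, hs]

theorem stmt7 {F : Type*} [Field F] [CharP F 2] (ω : F) (hω : ω ^ 2 + ω + 1 = 0)
    (n : ℕ) (f : MvPolynomial (Fin n) F) (hf : f.IsHomogeneous 2) :
    ∃ (m : ℕ) (L : Fin m → MvPolynomial (Fin n) F),
      (∀ i, (L i).IsHomogeneous 1) ∧ esymmVal 2 L = f ∧ esymmVal 1 L = 0 :=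
  stmt7_general n f hf
end

section
/- Over a field F of characteristic 2, the polynomial f = x_1x_2x_3 + x_4x_5x_6 cannot be written as g + q_1^3 + ... + q_k^3 where g is a product of a homogeneous linear polynomial and a homogeneous quadratic polynomial, and q_1,...,q_k are linear forms in F[x_1,...,x_6]. -/
/-!
Apply the third-order partial derivatives `∂ᵢ∂ⱼ∂ₖ` to the identity. In characteristic 2 every
derivation kills squares, so `∂ⱼ∂ₖ(q³) = q² ∂ⱼ∂ₖ q = 0` for a linear form `q`. The third
derivatives of `f` are therefore those of `g₁ g₂`, namely
`T(i,j,k) = aₖ Bᵢⱼ + aⱼ Bᵢₖ + aᵢ Bⱼₖ`, where `a` is the (constant) gradient of `g₁` and `B` the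
(constant) Hessian of `g₂`. In characteristic 2 the cross terms of
`aₖ T(i,j,m) + aⱼ T(i,k,m) + aᵢ T(j,k,m)` cancel in pairs, leaving `aₘ T(i,j,k)`. Taking
`(i,j,k) = (0,1,2)`, where `T = 1`, and `m ∈ {3,4,5}`, where the three `T`-values on the right
vanish, gives `a₃ = a₄ = a₅ = 0`; but then `T(3,4,5) = 0`, not `1`.
-/

open MvPolynomial

lemma Derivation.map_sq_eq_zero {R A : Type*} [CommSemiring R] [CommRing A] [Algebra R A]
    [CharP A 2] (D : Derivation R A A) (x : A) : D (x ^ 2) = 0 := by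
  rw [sq, Derivation.leibniz, CharTwo.add_self_eq_zero]

namespace MvPolynomial

variable {σ R : Type*}

section CommSemiring

variable [CommSemiring R]

lemma pderiv_eq_zero_of_isHomogeneous_zero {φ : MvPolynomial σ R} (h : φ.IsHomogeneous 0)
    (i : σ) : pderiv i φ = 0 := by
  rw [← totalDegree_zero_iff_isHomogeneous, totalDegree_eq_zero_iff_eq_C] at h
  rw [h, pderiv_C]

noncomputable def pderiv₃ (i j k : σ) : MvPolynomial σ R →ₗ[R] MvPolynomial σ R :=
  (pderiv i).toLinearMap ∘ₗ (pderiv j).toLinearMap ∘ₗ (pderiv k).toLinearMap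

@[simp]
lemma pderiv₃_apply (i j k : σ) (p : MvPolynomial σ R) :
    pderiv₃ i j k p = pderiv i (pderiv j (pderiv k p)) :=
  rfl

def linQuadTrilinear (a : σ → R) (B : σ → σ → R) (i j k : σ) : R :=
  a k * B i j + a j * B i k + a i * B j k

lemma pderiv₃_mul_of_isHomogeneous {g₁ g₂ : MvPolynomial σ R} (h₁ : g₁.IsHomogeneous 1)
    (h₂ : g₂.IsHomogeneous 2) (i j k : σ) :
    pderiv₃ i j k (g₁ * g₂) =
      linQuadTrilinear (fun i ↦ pderiv i g₁) (fun i j ↦ pderiv i (pderiv j g₂)) i j k := by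
  have hg₁ (i j : σ) : pderiv i (pderiv j g₁) = 0 :=
    pderiv_eq_zero_of_isHomogeneous_zero h₁.pderiv i
  have hg₂ (i j k : σ) : pderiv i (pderiv j (pderiv k g₂)) = 0 :=
    pderiv_eq_zero_of_isHomogeneous_zero h₂.pderiv.pderiv i
  simp only [pderiv₃_apply, linQuadTrilinear, Derivation.leibniz, smul_eq_mul, map_add, hg₁, hg₂,
    mul_zero, zero_add, add_zero]
  ring

end CommSemiring

section CharTwo

variable [CommRing R] [CharP R 2]

lemma mul_linQuadTrilinear (a : σ → R) (B : σ → σ → R) (i j k m : σ) :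
    a m * linQuadTrilinear a B i j k =
      a k * linQuadTrilinear a B i j m + a j * linQuadTrilinear a B i k m +
        a i * linQuadTrilinear a B j k m := by
  unfold linQuadTrilinear
  linear_combination (-(a j * a k * B i m + a i * a k * B j m + a i * a j * B k m)) *
    (CharTwo.two_eq_zero : (2 : R) = 0)

lemma pderiv₃_pow_three_of_isHomogeneous_one {q : MvPolynomial σ R} (hq : q.IsHomogeneous 1)
    (i j k : σ) : pderiv₃ i j k (q ^ 3) = 0 := by
  have hq₂ : pderiv j (pderiv k q) = 0 := pderiv_eq_zero_of_isHomogeneous_zero hq.pderiv j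
  simp only [pderiv₃_apply, pow_succ q 2, Derivation.leibniz, Derivation.map_sq_eq_zero, hq₂,
    smul_eq_mul, mul_zero, add_zero, map_zero]

end CharTwo

end MvPolynomial

theorem stmt12 {F : Type*} [Field F] [CharP F 2] :
    ¬ ∃ (g₁ g₂ : MvPolynomial (Fin 6) F) (k : ℕ) (q : Fin k → MvPolynomial (Fin 6) F),
        g₁.IsHomogeneous 1 ∧ g₂.IsHomogeneous 2 ∧ (∀ i, (q i).IsHomogeneous 1) ∧
        (X 0 * X 1 * X 2 + X 3 * X 4 * X 5 : MvPolynomial (Fin 6) F)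
          = g₁ * g₂ + ∑ i, (q i) ^ 3 := by
  rintro ⟨g₁, g₂, k, q, h₁, h₂, hq, hf⟩
  set a : Fin 6 → MvPolynomial (Fin 6) F := fun i ↦ pderiv i g₁
  set B : Fin 6 → Fin 6 → MvPolynomial (Fin 6) F := fun i j ↦ pderiv i (pderiv j g₂)
  have hT (i j k : Fin 6) :
      pderiv₃ i j k (X 0 * X 1 * X 2 + X 3 * X 4 * X 5) = linQuadTrilinear a B i j k := by
    rw [hf, map_add, map_sum, pderiv₃_mul_of_isHomogeneous h₁ h₂,
      Finset.sum_eq_zero fun l _ ↦ pderiv₃_pow_three_of_isHomogeneous_one (hq l) i j k, add_zero]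
  have h012 : linQuadTrilinear a B 0 1 2 = 1 := by rw [← hT]; simp [pderiv_X]
  have h345 : linQuadTrilinear a B 3 4 5 = 1 := by rw [← hT]; simp [pderiv_X]
  have ha (m : Fin 6) (hm : 3 ≤ m) : a m = 0 :=
    calc a m = a m * linQuadTrilinear a B 0 1 2 := by rw [h012, mul_one]
      _ = a 2 * linQuadTrilinear a B 0 1 m + a 1 * linQuadTrilinear a B 0 2 m +
            a 0 * linQuadTrilinear a B 1 2 m := mul_linQuadTrilinear a B 0 1 2 m
      _ = 0 := by
        rw [← hT, ← hT, ← hT]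
        revert hm
        fin_cases m <;> simp [pderiv_X]
  have h345_eq_zero : linQuadTrilinear a B 3 4 5 = 0 := by
    simp only [linQuadTrilinear, ha 3 (by decide), ha 4 (by decide), ha 5 (by decide),
      zero_mul, add_zero]
  exact one_ne_zero (h345.symm.trans h345_eq_zero)
end

section
/- Let F be a field with char F = 0 or with n - d + 1 not divisible by char F, and let 2 ≤ d ≤ n. If a ∈ F^n satisfies e_d(a) = 0 and ∂e_d/∂x_i(a) = 0 for all i, then e_{d-1}(a) = 0, and moreover for every i with a_i ≠ 0, ∂e_{d-1}/∂x_i(a) = 0. -/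
/-!
Write `e_k^{(i)}` for the `k`-th elementary symmetric polynomial in the variables other than
`x_i`. Splitting off `x_i` gives `e_{k+1} = e_{k+1}^{(i)} + x_i e_k^{(i)}`, hence
`∂_i e_{k+1} = e_k^{(i)}` and `e_k = ∂_i e_{k+1} + x_i ∂_i e_k`. Summing over `i` and applying
Euler's identity `∑ x_i ∂_i e_k = k e_k` yields `∑_i ∂_i e_{k+1} = (n - k) e_k`. At a common zero
`a` of the `∂_i e_d` this forces `(n - d + 1) e_{d-1}(a) = 0`, and then the identity evaluated at
`a` reads `a_i ∂_i e_{d-1}(a) = 0`.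
-/

open MvPolynomial

theorem Multiset.esymm_cons {R : Type*} [CommSemiring R] (a : R) (s : Multiset R) (k : ℕ) :
    (a ::ₘ s).esymm (k + 1) = s.esymm (k + 1) + a * s.esymm k := by
  simp only [Multiset.esymm, Multiset.powersetCard_cons, Multiset.map_add, Multiset.sum_add,
    Multiset.map_map, Function.comp_def, Multiset.prod_cons, Multiset.sum_map_mul_left]

namespace MvPolynomial

variable {σ R : Type*} [CommSemiring R] [Fintype σ]

theorem isHomogeneous_esymm (k : ℕ) : (esymm σ R k).IsHomogeneous k := by
  refine IsHomogeneous.sum _ _ _ fun t ht ↦ ?_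
  simpa [(Finset.mem_powersetCard.mp ht).2] using
    IsHomogeneous.prod t X (fun _ ↦ 1) fun j _ ↦ isHomogeneous_X R j

variable [DecidableEq σ]

noncomputable def esymmCompl (i : σ) (k : ℕ) : MvPolynomial σ R :=
  rename ((↑) : {j // j ≠ i} → σ) (esymm {j // j ≠ i} R k)

theorem pderiv_esymmCompl (i : σ) (k : ℕ) : pderiv i (esymmCompl (R := R) i k) = 0 :=
  pderiv_eq_zero_of_notMem_vars fun hi ↦ by
    obtain ⟨j, -, hj⟩ := mem_vars_rename _ _ hi
    exact j.2 hj

theorem esymmCompl_eq_multiset_esymm (i : σ) (k : ℕ) :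
    esymmCompl (R := R) i k = ((Finset.univ.val.erase i).map X).esymm k := by
  rw [esymmCompl, rename_eq_aeval, aeval_esymm_eq_multiset_esymm, ← Multiset.map_map,
    Finset.univ_val_map_subtype_val, Finset.filter_ne', Finset.erase_val]

theorem esymm_succ_eq_esymmCompl_add (i : σ) (k : ℕ) :
    esymm σ R (k + 1) = esymmCompl i (k + 1) + X i * esymmCompl i k := by
  rw [esymm_eq_multiset_esymm, ← Multiset.cons_erase (Finset.mem_univ_val i), Multiset.map_cons,
    Multiset.esymm_cons, esymmCompl_eq_multiset_esymm, esymmCompl_eq_multiset_esymm]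

theorem pderiv_esymm_succ (i : σ) (k : ℕ) :
    pderiv i (esymm σ R (k + 1)) = esymmCompl i k := by
  rw [esymm_succ_eq_esymmCompl_add i, map_add, pderiv_mul, pderiv_esymmCompl, pderiv_esymmCompl,
    pderiv_X_self]
  ring

theorem esymm_eq_pderiv_esymm_succ_add (i : σ) (k : ℕ) :
    esymm σ R k = pderiv i (esymm σ R (k + 1)) + X i * pderiv i (esymm σ R k) := by
  rw [pderiv_esymm_succ]
  cases k with
  | zero => rw [esymmCompl, esymm_zero, esymm_zero, map_one, pderiv_one, mul_zero, add_zero]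
  | succ k => rw [pderiv_esymm_succ, esymm_succ_eq_esymmCompl_add i]

theorem sum_pderiv_esymm_succ_add (k : ℕ) :
    ∑ i, pderiv i (esymm σ R (k + 1)) + k • esymm σ R k = Fintype.card σ • esymm σ R k := by
  conv_rhs => rw [← Finset.card_univ, ← Finset.sum_const]
  rw [← (isHomogeneous_esymm k).sum_X_mul_pderiv, ← Finset.sum_add_distrib]
  exact Finset.sum_congr rfl fun i _ ↦ (esymm_eq_pderiv_esymm_succ_add i k).symm

end MvPolynomial

theorem stmt17_general {F : Type*} [Field F] (n d : ℕ) (hd : 2 ≤ d) (hdn : d ≤ n)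
    (hchar : ((n - d + 1 : ℕ) : F) ≠ 0)
    (a : Fin n → F)
    (h1 : ∀ i : Fin n, eval a (pderiv i (esymm (Fin n) F d)) = 0) :
    eval a (esymm (Fin n) F (d - 1)) = 0 ∧
      ∀ i : Fin n, a i ≠ 0 → eval a (pderiv i (esymm (Fin n) F (d - 1))) = 0 := by
  obtain ⟨k, rfl⟩ : ∃ k, d = k + 1 := ⟨d - 1, by omega⟩
  rw [Nat.add_sub_cancel]
  have he : eval a (esymm (Fin n) F k) = 0 := by
    have hsum := congrArg (eval a) (sum_pderiv_esymm_succ_add (σ := Fin n) (R := F) k)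
    simp only [map_add, map_sum, h1, Finset.sum_const_zero, zero_add, map_nsmul,
      Fintype.card_fin] at hsum
    have hcast : ((n - (k + 1) + 1 : ℕ) : F) = n - k := by
      rw [show n - (k + 1) + 1 = n - k by omega, Nat.cast_sub (by omega)]
    rw [hcast] at hchar
    refine (mul_eq_zero.mp ?_).resolve_left hchar
    rw [sub_mul, ← nsmul_eq_mul, ← nsmul_eq_mul, hsum, sub_self]
  refine ⟨he, fun i hi ↦ ?_⟩
  have hsplit := congrArg (eval a) (esymm_eq_pderiv_esymm_succ_add (σ := Fin n) (R := F) i k)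
  rw [he, map_add, map_mul, eval_X, h1 i, zero_add] at hsplit
  exact (mul_eq_zero.mp hsplit.symm).resolve_left hi

theorem stmt17 {F : Type*} [Field F] (n d : ℕ) (hd : 2 ≤ d) (hdn : d ≤ n)
    (hchar : ((n - d + 1 : ℕ) : F) ≠ 0)
    (a : Fin n → F) (h0 : eval a (esymm (Fin n) F d) = 0)
    (h1 : ∀ i : Fin n, eval a (pderiv i (esymm (Fin n) F d)) = 0) :
    eval a (esymm (Fin n) F (d - 1)) = 0 ∧
      ∀ i : Fin n, a i ≠ 0 → eval a (pderiv i (esymm (Fin n) F (d - 1))) = 0 :=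
  stmt17_general n d hd hdn hchar a h1
end
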